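/- Let A ⊂ ℝᵖ be a compact self-similar fractal fixed under M ≥ 2 similitudes with common contraction ratio r, pairwise image separation σ > 0, d = log M / log(1/r), and s > d. Then for every k ≥ 1 and every N-point configuration ω_N ⊂ A: ℰ_s(A, M^k N) ≤ (M^k)^{1+s/d} E_s(ω_N) + N^{1−s/d} σ^{−s} (M^{s/d−1} − 1)^{−1} (M^k N)^{1+s/d}. -/

import Mathlib

open Filter MeasureTheory Metric Real
open scoped BigOperators ENNReal NNReal Topology

open Classical in
noncomputable def rieszEnergy {E : Type*} [PseudoMetricSpace E] (s : ℝ) (ω : Finset E) : ℝ :=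
  ∑ x ∈ ω, ∑ y ∈ ω, if x ≠ y then dist x y ^ (-s) else 0

noncomputable def minRieszEnergy {E : Type*} [PseudoMetricSpace E] (s : ℝ) (A : Set E) (N : ℕ) : ℝ :=
  sInf {e : ℝ | ∃ ω : Finset E, ↑ω ⊆ A ∧ ω.card = N ∧ e = rieszEnergy s ω}

lemma rieszEnergy_nonneg {E : Type*} [PseudoMetricSpace E] (s : ℝ) (ω : Finset E) :
    0 ≤ rieszEnergy s ω := by
  unfold rieszEnergy
  refine Finset.sum_nonneg fun x _ => Finset.sum_nonneg fun y _ => ?_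
  split
  · exact Real.rpow_nonneg dist_nonneg _
  · exact le_refl 0

lemma riesz_step {E : Type*} [MetricSpace E] (s r σ : ℝ) (hs : 0 < s) (hr : 0 < r)
    (hσ : 0 < σ) {M : ℕ} {A : Set E}
    (ψ : Fin M → E → E)
    (hψ : ∀ m x y, dist (ψ m x) (ψ m y) = r * dist x y)
    (hfix : A = ⋃ m, ψ m '' A)
    (hsep : ∀ i j, i ≠ j → ∀ x ∈ ψ i '' A, ∀ y ∈ ψ j '' A, σ ≤ dist x y)
    (ω : Finset E) (hω : ↑ω ⊆ A) :
    ∃ ω' : Finset E, ↑ω' ⊆ A ∧ ω'.card = M * ω.card ∧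
      rieszEnergy s ω' ≤ (M : ℝ) * r ^ (-s) * rieszEnergy s ω +
        σ ^ (-s) * (M : ℝ) ^ 2 * (ω.card : ℝ) ^ 2 := by
  classical
  have hinj : ∀ m : Fin M, Function.Injective (ψ m) := by
    intro m x y hxy
    have h := hψ m x y
    rw [hxy, dist_self] at h
    rcases mul_eq_zero.1 h.symm with h' | h'
    · exact absurd h' (ne_of_gt hr)
    · exact dist_eq_zero.1 h'
  have hmemA : ∀ (m : Fin M) (x : E), x ∈ ω → ψ m x ∈ A := by
    intro m x hx
    rw [hfix]
    exact Set.mem_iUnion.2 ⟨m, ⟨x, hω hx, rfl⟩⟩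
  have hdisj : ∀ i j : Fin M, i ≠ j → Disjoint (ω.image (ψ i)) (ω.image (ψ j)) := by
    intro i j hij
    rw [Finset.disjoint_left]
    rintro a ha hb
    obtain ⟨x, hx, rfl⟩ := Finset.mem_image.1 ha
    obtain ⟨y, hy, hyx⟩ := Finset.mem_image.1 hb
    have h1 : ψ i x ∈ ψ i '' A := ⟨x, hω hx, rfl⟩
    have h2 : ψ i x ∈ ψ j '' A := hyx ▸ ⟨y, hω hy, rfl⟩
    have := hsep i j hij _ h1 _ h2
    rw [dist_self] at this
    linarith
  set ω' : Finset E := Finset.univ.biUnion (fun m : Fin M => ω.image (ψ m)) with hω'def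
  have hpd : ((Finset.univ : Finset (Fin M)) : Set (Fin M)).PairwiseDisjoint
      (fun m : Fin M => ω.image (ψ m)) := fun i _ j _ hij => hdisj i j hij
  refine ⟨ω', ?_, ?_, ?_⟩
  · intro a ha
    obtain ⟨m, _, hm⟩ := Finset.mem_biUnion.1 ha
    obtain ⟨x, hx, rfl⟩ := Finset.mem_image.1 hm
    exact hmemA m x hx
  · rw [hω'def, Finset.card_biUnion (fun i _ j _ hij => hdisj i j hij)]
    simp [Finset.card_image_of_injective _ (hinj _)]
  · set g : E → E → ℝ := fun x y => if x ≠ y then dist x y ^ (-s) else 0 with hg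
    have hEexp : rieszEnergy s ω' = ∑ i : Fin M, ∑ j : Fin M,
        ∑ x ∈ ω.image (ψ i), ∑ y ∈ ω.image (ψ j), g x y := by
      unfold rieszEnergy
      simp only [hg]
      rw [hω'def, Finset.sum_biUnion hpd]
      refine Finset.sum_congr rfl fun i _ => ?_
      rw [show (∑ x ∈ ω.image (ψ i), ∑ y ∈ Finset.univ.biUnion (fun m : Fin M => ω.image (ψ m)),
            g x y) = ∑ x ∈ ω.image (ψ i), ∑ j : Fin M, ∑ y ∈ ω.image (ψ j), g x y from
          Finset.sum_congr rfl fun x _ => Finset.sum_biUnion hpd]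
      exact Finset.sum_comm
    have hdiag : ∀ i : Fin M,
        ∑ x ∈ ω.image (ψ i), ∑ y ∈ ω.image (ψ i), g x y = r ^ (-s) * rieszEnergy s ω := by
      intro i
      have hinj' : ∀ x ∈ ω, ∀ y ∈ ω, ψ i x = ψ i y → x = y := fun x _ y _ h => hinj i h
      calc ∑ x ∈ ω.image (ψ i), ∑ y ∈ ω.image (ψ i), g x y
          = ∑ a ∈ ω, ∑ y ∈ ω.image (ψ i), g (ψ i a) y := Finset.sum_image hinj'
        _ = ∑ a ∈ ω, ∑ b ∈ ω, g (ψ i a) (ψ i b) :=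
            Finset.sum_congr rfl fun a _ => Finset.sum_image hinj'
        _ = ∑ a ∈ ω, ∑ b ∈ ω, (if a ≠ b then r ^ (-s) * dist a b ^ (-s) else 0) := by
            refine Finset.sum_congr rfl fun a _ => Finset.sum_congr rfl fun b _ => ?_
            by_cases hab : a = b
            · subst hab; simp [hg]
            · have h1 : ψ i a ≠ ψ i b := fun h => hab (hinj i h)
              simp only [hg]
              rw [if_pos h1, if_pos hab, hψ, Real.mul_rpow hr.le dist_nonneg]
        _ = r ^ (-s) * rieszEnergy s ω := by
            unfold rieszEnergy
            rw [Finset.mul_sum]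
            refine Finset.sum_congr rfl fun a _ => ?_
            rw [Finset.mul_sum]
            refine Finset.sum_congr rfl fun b _ => ?_
            by_cases hab : a = b <;> simp [hab]
    have hX : (0:ℝ) ≤ (ω.card : ℝ) ^ 2 * σ ^ (-s) := mul_nonneg (sq_nonneg _) (Real.rpow_nonneg hσ.le _)
    have hoff : ∀ i j : Fin M, i ≠ j →
        ∑ x ∈ ω.image (ψ i), ∑ y ∈ ω.image (ψ j), g x y ≤ (ω.card : ℝ) ^ 2 * σ ^ (-s) := by
      intro i j hij
      have hterm : ∀ x ∈ ω.image (ψ i), ∀ y ∈ ω.image (ψ j), g x y ≤ σ ^ (-s) := by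
        intro x hx y hy
        obtain ⟨a, ha, rfl⟩ := Finset.mem_image.1 hx
        obtain ⟨b, hb, rfl⟩ := Finset.mem_image.1 hy
        have hxy : σ ≤ dist (ψ i a) (ψ j b) :=
          hsep i j hij _ ⟨a, hω ha, rfl⟩ _ ⟨b, hω hb, rfl⟩
        have hne : ψ i a ≠ ψ j b := by
          intro h; rw [h, dist_self] at hxy; linarith
        simp only [hg]
        rw [if_pos hne]
        exact Real.rpow_le_rpow_of_nonpos hσ hxy (by linarith)
      have hSnn : (0:ℝ) ≤ σ ^ (-s) := Real.rpow_nonneg hσ.le _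
      have inner : ∀ x ∈ ω.image (ψ i),
          ∑ y ∈ ω.image (ψ j), g x y ≤ (ω.card : ℝ) * σ ^ (-s) := by
        intro x hx
        have h1 := Finset.sum_le_card_nsmul (ω.image (ψ j)) (fun y => g x y) (σ ^ (-s))
          (fun y hy => hterm x hx y hy)
        rw [nsmul_eq_mul] at h1
        refine h1.trans ?_
        have hc : ((ω.image (ψ j)).card : ℝ) ≤ (ω.card : ℝ) := by
          exact_mod_cast Finset.card_image_le
        nlinarith
      calc ∑ x ∈ ω.image (ψ i), ∑ y ∈ ω.image (ψ j), g x y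
          ≤ ∑ _x ∈ ω.image (ψ i), (ω.card : ℝ) * σ ^ (-s) := Finset.sum_le_sum inner
        _ = ((ω.image (ψ i)).card : ℝ) * ((ω.card : ℝ) * σ ^ (-s)) := by
            rw [Finset.sum_const, nsmul_eq_mul]
        _ ≤ (ω.card : ℝ) * ((ω.card : ℝ) * σ ^ (-s)) := by
            have hc : ((ω.image (ψ i)).card : ℝ) ≤ (ω.card : ℝ) := by
              exact_mod_cast Finset.card_image_le
            have : (0:ℝ) ≤ (ω.card : ℝ) * σ ^ (-s) := mul_nonneg (Nat.cast_nonneg _) (Real.rpow_nonneg hσ.le _)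
            nlinarith
        _ = (ω.card : ℝ) ^ 2 * σ ^ (-s) := by ring
    rw [hEexp]
    have hsplit : (∑ i : Fin M, ∑ j : Fin M,
        ∑ x ∈ ω.image (ψ i), ∑ y ∈ ω.image (ψ j), g x y) =
        ∑ i : Fin M, ((∑ x ∈ ω.image (ψ i), ∑ y ∈ ω.image (ψ i), g x y) +
          ∑ j ∈ Finset.univ.erase i, ∑ x ∈ ω.image (ψ i), ∑ y ∈ ω.image (ψ j), g x y) :=
      Finset.sum_congr rfl fun i _ =>
        (Finset.add_sum_erase Finset.univ
          (fun j => ∑ x ∈ ω.image (ψ i), ∑ y ∈ ω.image (ψ j), g x y) (Finset.mem_univ i)).symm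
    rw [hsplit]
    have hb : ∀ i : Fin M,
        ((∑ x ∈ ω.image (ψ i), ∑ y ∈ ω.image (ψ i), g x y) +
          ∑ j ∈ Finset.univ.erase i, ∑ x ∈ ω.image (ψ i), ∑ y ∈ ω.image (ψ j), g x y) ≤
        r ^ (-s) * rieszEnergy s ω + (M : ℝ) * ((ω.card : ℝ) ^ 2 * σ ^ (-s)) := by
      intro i
      rw [hdiag i]
      refine add_le_add_right ?_ _
      have h1 := Finset.sum_le_card_nsmul (Finset.univ.erase i)
        (fun j => ∑ x ∈ ω.image (ψ i), ∑ y ∈ ω.image (ψ j), g x y)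
        ((ω.card : ℝ) ^ 2 * σ ^ (-s))
        (fun j hj => hoff i j (Finset.ne_of_mem_erase hj).symm)
      rw [nsmul_eq_mul] at h1
      refine h1.trans ?_
      have hc : (((Finset.univ : Finset (Fin M)).erase i).card : ℝ) ≤ (M : ℝ) := by
        have h2 : ((Finset.univ : Finset (Fin M)).erase i).card ≤ M := by
          calc ((Finset.univ : Finset (Fin M)).erase i).card
              ≤ (Finset.univ : Finset (Fin M)).card :=
                Finset.card_le_card (Finset.erase_subset _ _)
            _ = M := by simp
        exact_mod_cast h2
      nlinarith
    calc (∑ i : Fin M, ((∑ x ∈ ω.image (ψ i), ∑ y ∈ ω.image (ψ i), g x y) +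
          ∑ j ∈ Finset.univ.erase i, ∑ x ∈ ω.image (ψ i), ∑ y ∈ ω.image (ψ j), g x y))
        ≤ ∑ _i : Fin M, (r ^ (-s) * rieszEnergy s ω + (M : ℝ) * ((ω.card : ℝ) ^ 2 * σ ^ (-s))) :=
          Finset.sum_le_sum fun i _ => hb i
      _ = (M : ℝ) * (r ^ (-s) * rieszEnergy s ω + (M : ℝ) * ((ω.card : ℝ) ^ 2 * σ ^ (-s))) := by
          rw [Finset.sum_const, Finset.card_univ, Fintype.card_fin, nsmul_eq_mul]
      _ = (M : ℝ) * r ^ (-s) * rieszEnergy s ω + σ ^ (-s) * (M : ℝ) ^ 2 * (ω.card : ℝ) ^ 2 := by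
          ring

lemma riesz_iterate {E : Type*} [MetricSpace E] (s σ c q : ℝ) {M : ℕ} {A : Set E}
    (hc : 0 ≤ c) (hσ : 0 < σ) (hcq : c * q = (M : ℝ) ^ 2)
    (hstep : ∀ ω : Finset E, ↑ω ⊆ A → ∃ ω' : Finset E, ↑ω' ⊆ A ∧ ω'.card = M * ω.card ∧
      rieszEnergy s ω' ≤ c * rieszEnergy s ω + σ ^ (-s) * (M : ℝ) ^ 2 * (ω.card : ℝ) ^ 2)
    (ω : Finset E) (hω : ↑ω ⊆ A) :
    ∀ k : ℕ, ∃ ω' : Finset E, ↑ω' ⊆ A ∧ ω'.card = M ^ k * ω.card ∧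
      rieszEnergy s ω' ≤ c ^ k * rieszEnergy s ω +
        σ ^ (-s) * (ω.card : ℝ) ^ 2 * (c ^ k * ∑ i ∈ Finset.range k, q ^ (i + 1)) := by
  intro k
  induction k with
  | zero => exact ⟨ω, hω, by simp, by simp⟩
  | succ n ih =>
    obtain ⟨ωn, hsub, hcard, hE⟩ := ih
    obtain ⟨ω', hsub', hcard', hE'⟩ := hstep ωn hsub
    refine ⟨ω', hsub', by rw [hcard', hcard, pow_succ]; ring, ?_⟩
    have hcast : (ωn.card : ℝ) = (M : ℝ) ^ n * (ω.card : ℝ) := by rw [hcard]; push_cast; ring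
    have key : (M : ℝ) ^ 2 * ((M : ℝ) ^ n * (ω.card : ℝ)) ^ 2 =
        c ^ (n + 1) * q ^ (n + 1) * (ω.card : ℝ) ^ 2 := by
      calc (M : ℝ) ^ 2 * ((M : ℝ) ^ n * (ω.card : ℝ)) ^ 2
          = ((M : ℝ) ^ 2) ^ (n + 1) * (ω.card : ℝ) ^ 2 := by ring
        _ = (c * q) ^ (n + 1) * (ω.card : ℝ) ^ 2 := by rw [hcq]
        _ = c ^ (n + 1) * q ^ (n + 1) * (ω.card : ℝ) ^ 2 := by rw [mul_pow]
    calc rieszEnergy s ω'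
        ≤ c * rieszEnergy s ωn + σ ^ (-s) * (M : ℝ) ^ 2 * (ωn.card : ℝ) ^ 2 := hE'
      _ ≤ c * (c ^ n * rieszEnergy s ω +
            σ ^ (-s) * (ω.card : ℝ) ^ 2 * (c ^ n * ∑ i ∈ Finset.range n, q ^ (i + 1))) +
            σ ^ (-s) * (M : ℝ) ^ 2 * (ωn.card : ℝ) ^ 2 := by
          have := mul_le_mul_of_nonneg_left hE hc
          linarith
      _ = c ^ (n + 1) * rieszEnergy s ω +
            σ ^ (-s) * (ω.card : ℝ) ^ 2 *
              (c ^ (n + 1) * ∑ i ∈ Finset.range (n + 1), q ^ (i + 1)) := by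
          rw [hcast, Finset.sum_range_succ]
          linear_combination (σ ^ (-s)) * key

/-- iterated subdivision upper bound for the minimal energy. -/
theorem statement8 {p : ℕ} (s d r σ : ℝ) (M : ℕ) (hM : 2 ≤ M) (hr : 0 < r) (hr1 : r < 1)
    (hσ : 0 < σ) (A : Set (EuclideanSpace ℝ (Fin p))) (hA : IsCompact A)
    (ψ : Fin M → EuclideanSpace ℝ (Fin p) → EuclideanSpace ℝ (Fin p))
    (hψ : ∀ m x y, dist (ψ m x) (ψ m y) = r * dist x y)
    (hfix : A = ⋃ m, ψ m '' A)
    (hsep : ∀ i j, i ≠ j → ∀ x ∈ ψ i '' A, ∀ y ∈ ψ j '' A, σ ≤ dist x y)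
    (hd : d = Real.log M / Real.log (1 / r)) (hsd : d < s)
    (k : ℕ) (hk : 1 ≤ k)
    (N : ℕ) (ω : Finset (EuclideanSpace ℝ (Fin p))) (hω : ↑ω ⊆ A) (hcard : ω.card = N) :
    minRieszEnergy s A (M ^ k * N) ≤
      ((M : ℝ) ^ k) ^ (1 + s / d) * rieszEnergy s ω +
        (N : ℝ) ^ (1 - s / d) * σ ^ (-s) * ((M : ℝ) ^ (s / d - 1) - 1)⁻¹ *
          ((M : ℝ) ^ k * (N : ℝ)) ^ (1 + s / d) := by
  classical
  have hM2 : (2:ℝ) ≤ (M:ℝ) := by exact_mod_cast hM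
  have hM0 : (0:ℝ) < M := by linarith
  have hM1 : (1:ℝ) < M := by linarith
  have hlr : Real.log (1 / r) = -Real.log r := by rw [one_div, Real.log_inv]
  have hlrpos : 0 < -Real.log r := by have := Real.log_neg hr hr1; linarith
  have hlM : 0 < Real.log M := Real.log_pos hM1
  have hd0 : 0 < d := by rw [hd, hlr]; exact div_pos hlM hlrpos
  have hs : 0 < s := hd0.trans hsd
  have ht1 : 1 < s / d := (one_lt_div hd0).2 hsd
  have hdne : d ≠ 0 := ne_of_gt hd0
  have hdd : Real.log M = d * (-Real.log r) := by
    rw [hd, hlr]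
    exact (div_mul_cancel₀ _ (ne_of_gt hlrpos)).symm
  have hkey : r ^ (-s) = (M : ℝ) ^ (s / d) := by
    rw [Real.rpow_def_of_pos hr, Real.rpow_def_of_pos hM0, hdd]
    congr 1
    field_simp
  set c := (M : ℝ) ^ (1 + s / d) with hcdef
  set q := (M : ℝ) ^ (1 - s / d) with hqdef
  have hcM : c = (M : ℝ) * r ^ (-s) := by
    rw [hcdef, hkey, Real.rpow_add hM0, Real.rpow_one]
  have hc0 : 0 ≤ c := (Real.rpow_pos_of_pos hM0 _).le
  have hq0 : 0 < q := Real.rpow_pos_of_pos hM0 _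
  have hq1 : q < 1 := Real.rpow_lt_one_of_one_lt_of_neg hM1 (by linarith)
  have hcq : c * q = (M : ℝ) ^ 2 := by
    rw [hcdef, hqdef, ← Real.rpow_add hM0,
      show (1 + s / d) + (1 - s / d) = ((2:ℕ):ℝ) by push_cast; ring, Real.rpow_natCast]
  have hstep : ∀ ω' : Finset (EuclideanSpace ℝ (Fin p)), ↑ω' ⊆ A →
      ∃ ω'' : Finset (EuclideanSpace ℝ (Fin p)), ↑ω'' ⊆ A ∧ ω''.card = M * ω'.card ∧
        rieszEnergy s ω'' ≤ c * rieszEnergy s ω' +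
          σ ^ (-s) * (M : ℝ) ^ 2 * (ω'.card : ℝ) ^ 2 := by
    intro ω' hω'
    obtain ⟨ω'', h1, h2, h3⟩ := riesz_step s r σ hs hr hσ ψ hψ hfix hsep ω' hω'
    exact ⟨ω'', h1, h2, by rw [hcM]; exact h3⟩
  obtain ⟨ωk, hsubk, hcardk, hEk⟩ := riesz_iterate s σ c q hc0 hσ hcq hstep ω hω k
  have hSnn : (0:ℝ) ≤ σ ^ (-s) := Real.rpow_nonneg hσ.le _
  have hmin : minRieszEnergy s A (M ^ k * N) ≤ rieszEnergy s ωk := by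
    apply csInf_le
    · refine ⟨0, ?_⟩
      rintro e ⟨ω', -, -, rfl⟩
      exact rieszEnergy_nonneg s ω'
    · exact ⟨ωk, hsubk, by rw [hcardk, hcard], rfl⟩
  have hMk : ((M : ℝ) ^ k) ^ (1 + s / d) = c ^ k := by
    rw [hcdef, ← Real.rpow_natCast (M : ℝ) k, ← Real.rpow_mul hM0.le,
      ← Real.rpow_natCast ((M : ℝ) ^ (1 + s / d)) k, ← Real.rpow_mul hM0.le]
    ring_nf
  have hgeom : ∑ i ∈ Finset.range k, q ^ i ≤ (1 - q)⁻¹ := by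
    have h1q : 0 < 1 - q := by linarith
    rw [geom_sum_eq (ne_of_lt hq1) k, show q ^ k - 1 = -(1 - q ^ k) by ring,
      show q - 1 = -(1 - q) by ring, neg_div_neg_eq, inv_eq_one_div]
    rw [div_le_div_iff₀ h1q h1q]
    nlinarith [pow_nonneg hq0.le k]
  have hD0 : 0 < (M : ℝ) ^ (s / d - 1) - 1 := by
    have h1 : 1 < (M : ℝ) ^ (s / d - 1) :=
      (Real.one_lt_rpow_iff_of_pos hM0).2 (Or.inl ⟨hM1, by linarith⟩)
    linarith
  have hqM : q * (M : ℝ) ^ (s / d - 1) = 1 := by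
    rw [hqdef, ← Real.rpow_add hM0, show (1 - s / d) + (s / d - 1) = (0:ℝ) by ring,
      Real.rpow_zero]
  have hqD : q * (1 - q)⁻¹ = ((M : ℝ) ^ (s / d - 1) - 1)⁻¹ := by
    have h1q : 0 < 1 - q := by linarith
    have hmul : ((M : ℝ) ^ (s / d - 1) - 1) * (q * (1 - q)⁻¹) = 1 := by
      have h2 : ((M : ℝ) ^ (s / d - 1) - 1) * q = 1 - q := by linear_combination hqM
      calc ((M : ℝ) ^ (s / d - 1) - 1) * (q * (1 - q)⁻¹)
          = (((M : ℝ) ^ (s / d - 1) - 1) * q) * (1 - q)⁻¹ := by ring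
        _ = (1 - q) * (1 - q)⁻¹ := by rw [h2]
        _ = 1 := mul_inv_cancel₀ (ne_of_gt h1q)
    exact eq_inv_of_mul_eq_one_right hmul
  have hSig : ∑ i ∈ Finset.range k, q ^ (i + 1) ≤ ((M : ℝ) ^ (s / d - 1) - 1)⁻¹ := by
    have hq : ∑ i ∈ Finset.range k, q ^ (i + 1) = q * ∑ i ∈ Finset.range k, q ^ i := by
      rw [Finset.mul_sum]
      exact Finset.sum_congr rfl fun i _ => by ring
    rw [hq, ← hqD]
    exact mul_le_mul_of_nonneg_left hgeom hq0.le
  have hid : (N : ℝ) ^ (1 - s / d) * ((M : ℝ) ^ k * (N : ℝ)) ^ (1 + s / d) =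
      c ^ k * (N : ℝ) ^ 2 := by
    rcases Nat.eq_zero_or_pos N with hN | hN
    · subst hN
      simp [Real.zero_rpow (show (1:ℝ) - s / d ≠ 0 by intro h; rw [sub_eq_zero] at h; linarith)]
    · have hN0 : (0:ℝ) < N := by exact_mod_cast hN
      rw [Real.mul_rpow (by positivity) hN0.le, hMk]
      have h2 : (N : ℝ) ^ (1 - s / d) * (N : ℝ) ^ (1 + s / d) = (N : ℝ) ^ 2 := by
        rw [← Real.rpow_add hN0, show (1 - s / d) + (1 + s / d) = ((2:ℕ):ℝ) by push_cast; ring,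
          Real.rpow_natCast]
      linear_combination (c ^ k) * h2
  calc minRieszEnergy s A (M ^ k * N) ≤ rieszEnergy s ωk := hmin
    _ ≤ c ^ k * rieszEnergy s ω +
          σ ^ (-s) * (ω.card : ℝ) ^ 2 * (c ^ k * ∑ i ∈ Finset.range k, q ^ (i + 1)) := hEk
    _ ≤ c ^ k * rieszEnergy s ω +
          σ ^ (-s) * (N : ℝ) ^ 2 * (c ^ k * ((M : ℝ) ^ (s / d - 1) - 1)⁻¹) := by
        rw [hcard]
        refine add_le_add_right ?_ _
        have hck : (0:ℝ) ≤ c ^ k := pow_nonneg hc0 k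
        have h1 := mul_le_mul_of_nonneg_left hSig hck
        have h2 : (0:ℝ) ≤ σ ^ (-s) * (N : ℝ) ^ 2 := by positivity
        exact mul_le_mul_of_nonneg_left h1 h2
    _ = ((M : ℝ) ^ k) ^ (1 + s / d) * rieszEnergy s ω +
          (N : ℝ) ^ (1 - s / d) * σ ^ (-s) * ((M : ℝ) ^ (s / d - 1) - 1)⁻¹ *
            ((M : ℝ) ^ k * (N : ℝ)) ^ (1 + s / d) := by
        rw [hMk]
        linear_combination (-(σ ^ (-s) * ((M : ℝ) ^ (s / d - 1) - 1)⁻¹)) * hid
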